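/- Fix an integer k ≥ 2. If aub ∼_k cvd where a, b, c, d are letters and u, v are words, then u ∼_{k−1} v. -/

import Mathlib

/-- Number of occurrences of `x` as a factor of `w`. -/
def occ {A : Type*} [DecidableEq A] (w x : List A) : ℕ :=
  ((List.range (w.length + 1)).filter (fun i => decide (x <+: w.drop i))).length

/-- `k`-Abelian equivalence. -/
def KAbEq {A : Type*} [DecidableEq A] (k : ℕ) (u v : List A) : Prop :=
  ∀ x : List A, x ≠ [] → x.length ≤ k → occ u x = occ v x

/-!
An occurrence of a nonempty factor `x` in `a u b` either lies inside `u`, or is a prefix, or is a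
suffix, the last two overlapping only when `x` is the whole word. So `|aub|_x - |u|_x` is determined
by the length of `aub` and by whether `x` is a prefix and whether it is a suffix of it. For
`|x| ≤ k - 1`, `k`-abelian equivalence fixes all of these: the length is the sum of the letter
counts, and `x` is a prefix of `w` exactly when `|w|_x` exceeds `∑_e |w|_{e x}`, every other
occurrence of `x` extending uniquely to the left (symmetrically for suffixes).
-/

lemma append_singleton_suffix_append_singleton_iff {A : Type*} {x w : List A} {e b : A} :
    x ++ [e] <:+ w ++ [b] ↔ e = b ∧ x <:+ w := by
  simp [← List.reverse_prefix, List.cons_prefix_cons]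

section

variable {A : Type*} [DecidableEq A]

lemma occ_nil {x : List A} (hx : x ≠ []) : occ [] x = 0 := by
  simp [occ, hx]

lemma occ_cons (a : A) (w x : List A) :
    occ (a :: w) x = (if x <+: a :: w then 1 else 0) + occ w x := by
  unfold occ
  rw [List.length_cons, List.range_succ_eq_map, List.filter_cons]
  simp only [List.drop_zero, List.filter_map, Function.comp_def, List.drop_succ_cons]
  split <;> simp_all [Nat.add_comm]

lemma ite_prefix_concat (w : List A) (b : A) (x : List A) :
    (if x <+: w ++ [b] then 1 else 0)
      = (if x = w ++ [b] then 1 else 0) + (if x <+: w then (1 : ℕ) else 0) := by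
  simp only [List.prefix_concat_iff]
  by_cases hx : x = w ++ [b]
  · subst hx
    have : ¬ w ++ [b] <+: w := fun hw => by simpa using hw.length_le
    simp [this]
  · simp [hx]

lemma ite_suffix_cons (a : A) (w x : List A) :
    (if x <:+ a :: w then 1 else 0)
      = (if x = a :: w then 1 else 0) + (if x <:+ w then (1 : ℕ) else 0) := by
  simp only [List.suffix_cons_iff]
  by_cases hx : x = a :: w
  · subst hx
    have : ¬ a :: w <:+ w := fun hw => by simpa using hw.length_le
    simp [this]
  · simp [hx]

lemma occ_append_singleton (w : List A) (b : A) {x : List A} (hx : x ≠ []) :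
    occ (w ++ [b]) x = occ w x + (if x <:+ w ++ [b] then 1 else 0) := by
  induction w with
  | nil => simpa [occ_cons, occ_nil hx, ite_suffix_cons, hx] using ite_prefix_concat [] b x
  | cons a t ih =>
    have hpre := ite_prefix_concat (a :: t) b x
    rw [List.cons_append] at hpre ⊢
    rw [occ_cons, hpre, ih, occ_cons, ite_suffix_cons]
    ring

lemma occ_cons_append_singleton (a b : A) (u : List A) {x : List A} (hx : x ≠ []) :
    occ (a :: u ++ [b]) x + (if x = a :: u ++ [b] then 1 else 0)
      = occ u x + (if x <+: a :: u ++ [b] then 1 else 0)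
        + (if x <:+ a :: u ++ [b] then 1 else 0) := by
  rw [List.cons_append, occ_cons, occ_append_singleton u b hx, ite_suffix_cons]
  ring

lemma occ_singleton (w : List A) (e : A) : occ w [e] = w.count e := by
  induction w with
  | nil => simp [occ_nil]
  | cons a t ih =>
    rw [occ_cons, ih, List.count_cons]
    by_cases hea : e = a <;> simp [hea, Nat.add_comm, Ne.symm]

lemma sum_occ_singleton {S : Finset A} {w : List A} (hS : ∀ e ∈ w, e ∈ S) :
    ∑ e ∈ S, occ w [e] = w.length := by
  simp only [occ_singleton]
  simpa using Multiset.sum_count_eq_card (s := S) (m := (w : Multiset A)) (by simpa using hS)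

lemma occ_eq_prefix_add_sum_occ_cons {S : Finset A} {x : List A} (hx : x ≠ []) :
    ∀ {w : List A}, (∀ e ∈ w, e ∈ S) →
      occ w x = (if x <+: w then 1 else 0) + ∑ e ∈ S, occ w (e :: x)
  | [], _ => by simp [occ_nil, hx]
  | a :: t, hS => by
    have ha : a ∈ S := hS a List.mem_cons_self
    rw [occ_cons, occ_eq_prefix_add_sum_occ_cons hx (fun e he => hS e (List.mem_cons_of_mem a he))]
    simp only [occ_cons, Finset.sum_add_distrib, List.cons_prefix_cons, ite_and,
      Finset.sum_ite_eq' S a, if_pos ha]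

lemma occ_eq_suffix_add_sum_occ_append {S : Finset A} {x : List A} (hx : x ≠ []) :
    ∀ {w : List A}, (∀ e ∈ w, e ∈ S) →
      occ w x = (if x <:+ w then 1 else 0) + ∑ e ∈ S, occ w (x ++ [e]) := by
  intro w
  induction w using List.reverseRecOn with
  | nil => simp [occ_nil, hx]
  | append_singleton t b ih =>
    intro hS
    have hb : b ∈ S := hS b (List.mem_append_right t (List.mem_singleton_self b))
    rw [occ_append_singleton t b hx, ih (fun e he => hS e (List.mem_append_left [b] he))]
    simp only [occ_append_singleton t b (x := x ++ [_]) (by simp),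
      Finset.sum_add_distrib, append_singleton_suffix_append_singleton_iff, ite_and,
      Finset.sum_ite_eq' S b, if_pos hb]
    ring

end

namespace KAbEq

variable {A : Type*} [DecidableEq A] {k : ℕ} {u v : List A}

lemma length_eq (h : KAbEq k u v) (hk : 1 ≤ k) : u.length = v.length := by
  have hu : ∀ e ∈ u, e ∈ u.toFinset ∪ v.toFinset := fun e he => by simp [he]
  have hv : ∀ e ∈ v, e ∈ u.toFinset ∪ v.toFinset := fun e he => by simp [he]
  rw [← sum_occ_singleton hu, ← sum_occ_singleton hv]
  exact Finset.sum_congr rfl fun e _ => h [e] (List.cons_ne_nil e []) hk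

lemma isPrefix_iff (h : KAbEq k u v) {x : List A} (hx : x ≠ []) (hxk : x.length < k) :
    x <+: u ↔ x <+: v := by
  have hu : ∀ e ∈ u, e ∈ u.toFinset ∪ v.toFinset := fun e he => by simp [he]
  have hv : ∀ e ∈ v, e ∈ u.toFinset ∪ v.toFinset := fun e he => by simp [he]
  have key := h x hx hxk.le
  rw [occ_eq_prefix_add_sum_occ_cons hx hu, occ_eq_prefix_add_sum_occ_cons hx hv,
    Finset.sum_congr rfl fun e _ => h (e :: x) (List.cons_ne_nil e x) hxk] at key
  split_ifs at key <;> simp_all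

lemma isSuffix_iff (h : KAbEq k u v) {x : List A} (hx : x ≠ []) (hxk : x.length < k) :
    x <:+ u ↔ x <:+ v := by
  have hu : ∀ e ∈ u, e ∈ u.toFinset ∪ v.toFinset := fun e he => by simp [he]
  have hv : ∀ e ∈ v, e ∈ u.toFinset ∪ v.toFinset := fun e he => by simp [he]
  have key := h x hx hxk.le
  rw [occ_eq_suffix_add_sum_occ_append hx hu, occ_eq_suffix_add_sum_occ_append hx hv,
    Finset.sum_congr rfl fun e _ => h (x ++ [e]) (by simp) (by simpa using hxk)] at key
  split_ifs at key <;> simp_all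

lemma eq_iff (h : KAbEq k u v) {x : List A} (hx : x ≠ []) (hxk : x.length < k) :
    x = u ↔ x = v := by
  have hlen := h.length_eq (by omega)
  constructor
  · rintro rfl
    exact ((h.isPrefix_iff hx hxk).1 (List.prefix_refl x)).eq_of_length hlen
  · rintro rfl
    exact ((h.isPrefix_iff hx hxk).2 (List.prefix_refl x)).eq_of_length hlen.symm

end KAbEq

theorem stmt6_general {A : Type*} [DecidableEq A] (k : ℕ)
    (a b c d : A) (u v : List A)
    (h : KAbEq k (a :: u ++ [b]) (c :: v ++ [d])) : KAbEq (k - 1) u v := by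
  intro x hx hxk
  have hxk_lt : x.length < k := by
    have := List.length_pos_iff.2 hx
    omega
  have hu := occ_cons_append_singleton a b u hx
  have hv := occ_cons_append_singleton c d v hx
  simp only [h x hx hxk_lt.le, h.eq_iff hx hxk_lt, h.isPrefix_iff hx hxk_lt,
    h.isSuffix_iff hx hxk_lt] at hu
  omega

theorem stmt6 {A : Type*} [DecidableEq A] (k : ℕ) (hk : 2 ≤ k)
    (a b c d : A) (u v : List A)
    (h : KAbEq k (a :: u ++ [b]) (c :: v ++ [d])) : KAbEq (k - 1) u v :=
  stmt6_general k a b c d u v h
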